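/- arXiv:1709.08697 — 2 statements merged into one kernel-verified Lean document; each statement's English description precedes it below -/
import Mathlib

section
/- Let E be a vector bundle on a smooth variety X, F ⊂ E a subbundle, and α a class in A_*(P(F)) pushed forward to A_*(P(E)). Then Shadow_E(α) = c(E/F) ∩ Shadow_F(α). -/
/-!
Statement 1: If `F ⊂ E` is a subbundle and `α ∈ A_*(P(F))` is pushed forward to
`A_*(P(E))`, then `Shadow_E(α) = c(E/F) ∩ Shadow_F(α)`.

We model the Chow groups of `P(F)` and `P(E)` by commutative `R`-algebras
`SF`, `SE` with nilpotent hyperplane classes `ζF`, `ζE`, the pushforward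
`p : A_*(P(F)) → A_*(P(E))` of the inclusion, compatible with the `O(1)`-classes
and with the projections `qF`, `qE` to `X`.  Shadows are defined by the Segre
formula `Shadow_E(β) = c(E) · q_*(∑_m ζ^m · β)`, and the Whitney formula reads
`c(E) = c(F) · c(E/F)`.
-/
theorem stmt_1 {R SF SE : Type*} [CommRing R] [CommRing SF] [CommRing SE]
    [Algebra R SF] [Algebra R SE]
    (N : ℕ) (ζF : SF) (ζE : SE)
    (hnilF : ζF ^ N = 0) (hnilE : ζE ^ N = 0)
    (p : SF →ₗ[R] SE)                 -- pushforward along P(F) ↪ P(E)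
    (hp : ∀ x : SF, p (ζF * x) = ζE * p x)
    (qF : SF →ₗ[R] R) (qE : SE →ₗ[R] R)
    (hq : ∀ x : SF, qE (p x) = qF x)
    (cE cF cQ : R)                     -- c(E), c(F), c(E/F)
    (hWhitney : cE = cF * cQ)
    (α : SF) :
    -- Shadow_E(p α) = c(E/F) ∩ Shadow_F(α)
    cE * qE (∑ m ∈ Finset.range N, ζE ^ m * p α)
      = cQ * (cF * qF (∑ m ∈ Finset.range N, ζF ^ m * α)) := by
  have key : ∀ m : ℕ, p (ζF ^ m * α) = ζE ^ m * p α := by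
    intro m
    induction m with
    | zero => simp
    | succ n ih =>
      rw [pow_succ, pow_succ, mul_comm (ζF ^ n) ζF, mul_assoc, hp, ih,
        mul_comm (ζE ^ n) ζE, mul_assoc]
  have : qE (∑ m ∈ Finset.range N, ζE ^ m * p α)
      = qF (∑ m ∈ Finset.range N, ζF ^ m * α) := by
    rw [map_sum, map_sum]
    refine Finset.sum_congr rfl fun m _ => ?_
    rw [← key, hq]
  rw [this, hWhitney, mul_comm cF cQ, mul_assoc]
end

section
/- Let E be a vector bundle on a smooth variety X and L a line bundle. If Shadow_E(α) = Σ_{j=0}^{e} α^{k-j} (graded by codimension), then Shadow_{E⊗L}(α) = Σ_{j=0}^{e} c(L)^j ∩ α^{k-j}. -/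
/-- Binomial expansion with the summation range extended beyond `j`. -/
lemma aux_pow_sum {A : Type*} [CommRing A] (e j : ℕ) (hj : j ≤ e) (x y : A) :
    ∑ i ∈ Finset.range (e + 1), x ^ i * y ^ (j - i) * (j.choose i : A)
      = (x + y) ^ j := by
  rw [add_pow]
  exact (Finset.sum_subset (Finset.range_subset_range.mpr (by omega))
    (by
      intro i _ hi
      have : j < i := by simpa using hi
      simp [Nat.choose_eq_zero_of_lt this])).symm

theorem stmt_2 {R S : Type*} [CommRing R] [CommRing S] [Algebra R S]
    (e : ℕ) (ζ : S) (l : R)  -- l = c₁(L)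
    (hfree : ∀ f g : ℕ → R,
      (∑ j ∈ Finset.range (e + 1), ζ ^ j * algebraMap R S (f j)) =
      (∑ j ∈ Finset.range (e + 1), ζ ^ j * algebraMap R S (g j)) →
      ∀ j ∈ Finset.range (e + 1), f j = g j)
    (a b : ℕ → R) (α : S)
    (hα : α = ∑ j ∈ Finset.range (e + 1), ζ ^ j * algebraMap R S (a j))
    (hβ : α = ∑ j ∈ Finset.range (e + 1),
      (ζ - algebraMap R S l) ^ j * algebraMap R S (b j)) :
    -- Shadow_{E⊗L}(α) = ∑_j c(L)^j ∩ α^{k-j}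
    (∑ j ∈ Finset.range (e + 1), b j)
      = ∑ j ∈ Finset.range (e + 1), (1 + l) ^ j * a j := by
  set g : ℕ → R := fun i =>
    ∑ j ∈ Finset.range (e + 1), b j * (-l) ^ (j - i) * (j.choose i : R) with hg
  have key : (∑ i ∈ Finset.range (e + 1), ζ ^ i * algebraMap R S (g i)) = α := by
    rw [hβ]
    simp only [hg, map_sum, map_mul, map_pow, map_natCast, map_neg,
      Finset.mul_sum]
    rw [Finset.sum_comm]
    refine Finset.sum_congr rfl fun j hj => ?_
    have hj' : j ≤ e := by simpa using Nat.lt_succ_iff.mp (Finset.mem_range.mp hj)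
    calc ∑ i ∈ Finset.range (e + 1),
          ζ ^ i * (algebraMap R S (b j) * (-(algebraMap R S l)) ^ (j - i) *
            (j.choose i : S))
        = (∑ i ∈ Finset.range (e + 1),
            ζ ^ i * (-(algebraMap R S l)) ^ (j - i) * (j.choose i : S)) *
            algebraMap R S (b j) := by
          rw [Finset.sum_mul]; refine Finset.sum_congr rfl fun i _ => by ring
      _ = (ζ - algebraMap R S l) ^ j * algebraMap R S (b j) := by
          rw [aux_pow_sum e j hj', ← sub_eq_add_neg]
  have ha : ∀ i ∈ Finset.range (e + 1), a i = g i := by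
    apply hfree
    rw [← hα, key]
  calc ∑ j ∈ Finset.range (e + 1), b j
      = ∑ j ∈ Finset.range (e + 1), b j * 1 := by simp
    _ = ∑ j ∈ Finset.range (e + 1),
          b j * ((1 + l) + (-l)) ^ j := by
        refine Finset.sum_congr rfl fun j _ => by ring_nf
    _ = ∑ j ∈ Finset.range (e + 1), b j *
          ∑ i ∈ Finset.range (e + 1),
            (1 + l) ^ i * (-l) ^ (j - i) * (j.choose i : R) := by
        refine Finset.sum_congr rfl fun j hj => ?_
        rw [aux_pow_sum e j (by simpa using Nat.lt_succ_iff.mp (Finset.mem_range.mp hj))]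
    _ = ∑ i ∈ Finset.range (e + 1), (1 + l) ^ i * g i := by
        simp only [Finset.mul_sum]
        rw [Finset.sum_comm]
        refine Finset.sum_congr rfl fun i _ => ?_
        simp only [hg, Finset.mul_sum]
        refine Finset.sum_congr rfl fun j _ => by ring
    _ = ∑ j ∈ Finset.range (e + 1), (1 + l) ^ j * a j := by
        refine Finset.sum_congr rfl fun i hi => ?_
        rw [ha i hi]
end
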